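/- The double coset $G_\mathbb{R} c_{\beta_1} w_{\beta_2} B$ is contained in the closure (in $G_\mathbb{C}$) of the double coset $G_\mathbb{R} c_\delta w_{\beta_2} B$. (The inclusion $S'_9 \subset {S'_7}^{cl}$ used to deduce (3.4) from (3.2).) -/

import Mathlib

open Matrix

noncomputable section

/-- 4×4 complex matrices. -/
abbrev M4 : Type := Matrix (Fin 4) (Fin 4) ℂ

/-- The standard symplectic form matrix `J = [[0, -I₂],[I₂, 0]]`. -/
def Jmat : M4 := !![0, 0, -1, 0; 0, 0, 0, -1; 1, 0, 0, 0; 0, 1, 0, 0]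

/-- `G_ℂ = Sp(2,ℂ) = {g ∈ GL(4,ℂ) : ᵗg J g = J}`. -/
def GC : Set M4 := {g | IsUnit g ∧ gᵀ * Jmat * g = Jmat}

/-- `K_ℂ = {diag(g, ᵗg⁻¹) : g ∈ GL(2,ℂ)}`. -/
def KC : Set M4 :=
  {m | ∃ g : Matrix (Fin 2) (Fin 2) ℂ, IsUnit g ∧
    m = !![g 0 0, g 0 1, 0, 0;
           g 1 0, g 1 1, 0, 0;
           0, 0, (gᵀ)⁻¹ 0 0, (gᵀ)⁻¹ 0 1;
           0, 0, (gᵀ)⁻¹ 1 0, (gᵀ)⁻¹ 1 1]}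

/-- The Hermitian form of signature (2,2): `(w,z) = w̄₁z₁ + w̄₂z₂ - w̄₃z₃ - w̄₄z₄`. -/
def hermForm (w z : Fin 4 → ℂ) : ℂ :=
  star (w 0) * z 0 + star (w 1) * z 1 - star (w 2) * z 2 - star (w 3) * z 3

/-- `G_ℝ = G_ℂ ∩ U(2,2)`. -/
def GR : Set M4 :=
  {g | g ∈ GC ∧ ∀ w z : Fin 4 → ℂ, hermForm (g.mulVec w) (g.mulVec z) = hermForm w z}

/-- The standard basis vectors of `ℂ⁴`. -/
def stdVec (i : Fin 4) : Fin 4 → ℂ := Pi.single i 1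

/-- `U₊ = ℂe₁ ⊕ ℂe₂`. -/
def Uplus : Submodule ℂ (Fin 4 → ℂ) := Submodule.span ℂ {stdVec 0, stdVec 1}

/-- `U₋ = ℂe₃ ⊕ ℂe₄`. -/
def Uminus : Submodule ℂ (Fin 4 → ℂ) := Submodule.span ℂ {stdVec 2, stdVec 3}

/-- The line `ℂe₁`. -/
def line1 : Submodule ℂ (Fin 4 → ℂ) := Submodule.span ℂ {stdVec 0}

/-- `Q = {g ∈ G_ℂ : g U₊ = U₊}`. -/
def Qpar : Set M4 := {g | g ∈ GC ∧ Uplus.map g.mulVecLin = Uplus}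

/-- `Q̄ = {g ∈ G_ℂ : g U₋ = U₋}`. -/
def Qbar : Set M4 := {g | g ∈ GC ∧ Uminus.map g.mulVecLin = Uminus}

/-- The Borel subgroup `B = {g ∈ G_ℂ : g ℂe₁ = ℂe₁, g U₊ = U₊}`. -/
def Bor : Set M4 :=
  {g | g ∈ GC ∧ line1.map g.mulVecLin = line1 ∧ Uplus.map g.mulVecLin = Uplus}

/-- `t₁(s) = exp s(E₃₁ - E₁₃)`. -/
def t1 (s : ℝ) : M4 :=
  !![(Real.cos s : ℂ), 0, (-(Real.sin s) : ℂ), 0;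
     0, 1, 0, 0;
     ((Real.sin s : ℝ) : ℂ), 0, (Real.cos s : ℂ), 0;
     0, 0, 0, 1]

/-- `t₂(s) = exp s(E₄₂ - E₂₄)`. -/
def t2 (s : ℝ) : M4 :=
  !![1, 0, 0, 0;
     0, (Real.cos s : ℂ), 0, (-(Real.sin s) : ℂ);
     0, 0, 1, 0;
     0, ((Real.sin s : ℝ) : ℂ), 0, (Real.cos s : ℂ)]

def cb1 : M4 := t1 (Real.pi / 4)
def cb2 : M4 := t2 (Real.pi / 4)
def wb1 : M4 := t1 (Real.pi / 2)
def wb2 : M4 := t2 (Real.pi / 2)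

/-- `c_δ = (1/√2) · [[1,0,0,-1],[0,1,-1,0],[0,1,1,0],[1,0,0,1]]`. -/
def cdelta : M4 :=
  ((Real.sqrt 2 : ℂ))⁻¹ • !![1, 0, 0, -1; 0, 1, -1, 0; 0, 1, 1, 0; 1, 0, 0, 1]

/-- The double coset `A g C = {a g c : a ∈ A, c ∈ C}`. -/
def dc (A : Set M4) (g : M4) (C : Set M4) : Set M4 :=
  {m | ∃ a ∈ A, ∃ c ∈ C, m = a * g * c}

/-!
As `s → ∞`, the hyperbolic one-parameter subgroup `h(s)` of `G_ℝ` acting on `ℂe₁ ⊕ ℂe₃` moves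
the flag `ℂ(e₁ + e₄) ⊂ ℂe₁ ⊕ ℂe₄` of `c_δ w_{β₂}` to the flag `ℂ(e₁ + e₃) ⊂ ℂ(e₁ + e₃) ⊕ ℂe₄` of
`c_{β₁} w_{β₂}`. Lifted to `G_ℂ`: with `μ = e^{-s}`, factoring `(c_{β₁} w_{β₂})⁻¹ h(s) c_δ w_{β₂}`
as `L(μ) b(μ)⁻¹` with `b(μ) ∈ B` and `L(μ)` lower unipotent gives
`h(s) c_δ w_{β₂} b(μ) = c_{β₁} w_{β₂} L(μ) → c_{β₁} w_{β₂}`. The closure of a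
`(G_ℝ, B)`-double coset is stable under `G_ℝ × B`, so this suffices.
-/

open Filter Topology

def boost13 (c s : ℝ) : M4 :=
  !![(c : ℂ), 0, (s : ℂ), 0; 0, 1, 0, 0; (s : ℂ), 0, (c : ℂ), 0; 0, 0, 0, 1]

def borelPart (μ : ℂ) : M4 :=
  !![2 * μ, (√2 : ℂ)⁻¹, -(2 * μ)⁻¹, (√2 : ℂ)⁻¹;
     0, (√2 : ℂ)⁻¹, (2 * μ)⁻¹, -(√2 : ℂ)⁻¹;
     0, 0, (2 * μ)⁻¹, 0;
     0, 0, -(2 * μ)⁻¹, √2]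

def lowerUnip (μ : ℂ) : M4 :=
  !![1, 0, 0, 0; √2 * μ, 1, 0, 0; -μ ^ 2, 0, 1, -√2 * μ; 0, 0, 0, 1]

lemma sq_sqrt_two : (√2 : ℂ) ^ 2 = 2 := by
  rw [← Complex.ofReal_pow, Real.sq_sqrt zero_le_two]; norm_num

lemma Jmat_mul_Jmat : Jmat * Jmat = -1 := by
  ext i j
  fin_cases i <;> fin_cases j <;> simp [Jmat, Matrix.mul_apply, Fin.sum_univ_four]

lemma mem_GC_of_transpose_mul_mul {g : M4} (h : gᵀ * Jmat * g = Jmat) : g ∈ GC := by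
  have hinv : -(Jmat * gᵀ * Jmat) * g = 1 := by
    rw [neg_mul, mul_assoc, mul_assoc, ← mul_assoc gᵀ, h, Jmat_mul_Jmat, neg_neg]
  exact ⟨⟨⟨g, _, mul_eq_one_comm.mp hinv, hinv⟩, rfl⟩, h⟩

lemma GC_mul {g h : M4} (hg : g ∈ GC) (hh : h ∈ GC) : g * h ∈ GC := by
  refine ⟨hg.1.mul hh.1, ?_⟩
  rw [Matrix.transpose_mul]
  calc hᵀ * gᵀ * Jmat * (g * h) = hᵀ * (gᵀ * Jmat * g) * h := by simp only [mul_assoc]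
    _ = Jmat := by rw [hg.2, hh.2]

lemma GR_mul {g h : M4} (hg : g ∈ GR) (hh : h ∈ GR) : g * h ∈ GR :=
  ⟨GC_mul hg.1 hh.1, fun w z => by rw [← Matrix.mulVec_mulVec, ← Matrix.mulVec_mulVec, hg.2, hh.2]⟩

lemma Bor_mul {g h : M4} (hg : g ∈ Bor) (hh : h ∈ Bor) : g * h ∈ Bor :=
  ⟨GC_mul hg.1 hh.1,
    by rw [Matrix.mulVecLin_mul, Submodule.map_comp, hh.2.1, hg.2.1],
    by rw [Matrix.mulVecLin_mul, Submodule.map_comp, hh.2.2, hg.2.2]⟩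

lemma boost13_mem_GR {c s : ℝ} (h : c ^ 2 - s ^ 2 = 1) : boost13 c s ∈ GR := by
  have hC : (c : ℂ) ^ 2 - (s : ℂ) ^ 2 = 1 := by exact_mod_cast h
  refine ⟨mem_GC_of_transpose_mul_mul ?_, fun w z => ?_⟩
  · ext i j
    fin_cases i <;> fin_cases j <;>
      simp [boost13, Jmat, Matrix.mul_apply, Fin.sum_univ_four] <;> grind
  · simp [hermForm, boost13, Matrix.mulVec, dotProduct, Fin.sum_univ_four]
    linear_combination (starRingEnd ℂ (w 0) * z 0 - starRingEnd ℂ (w 2) * z 2) * hC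

lemma map_line1_eq {g : M4} {a : ℂ} (ha : a ≠ 0) (h : g *ᵥ stdVec 0 = a • stdVec 0) :
    line1.map g.mulVecLin = line1 := by
  rw [line1, Submodule.map_span, Set.image_singleton, Matrix.mulVecLin_apply, h,
    Submodule.span_singleton_smul_eq (IsUnit.mk0 a ha)]

lemma map_Uplus_eq {g : M4} {a c d : ℂ} (ha : a ≠ 0) (hd : d ≠ 0)
    (h₀ : g *ᵥ stdVec 0 = a • stdVec 0) (h₁ : g *ᵥ stdVec 1 = c • stdVec 0 + d • stdVec 1) :
    Uplus.map g.mulVecLin = Uplus := by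
  rw [Uplus, Submodule.map_span, Set.image_pair, Matrix.mulVecLin_apply,
    Matrix.mulVecLin_apply, h₀, h₁]
  apply le_antisymm <;> rw [Submodule.span_le] <;> rintro v (rfl | rfl) <;>
    rw [SetLike.mem_coe, Submodule.mem_span_pair]
  · exact ⟨a, 0, by simp⟩
  · exact ⟨c, d, rfl⟩
  · exact ⟨a⁻¹, 0, by simp [smul_smul, ha]⟩
  · refine ⟨-(d⁻¹ * c * a⁻¹), d⁻¹, ?_⟩
    simp only [smul_add, smul_smul]
    field_simp
    module

lemma borelPart_mem_Bor {μ : ℂ} (hμ : μ ≠ 0) : borelPart μ ∈ Bor := by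
  have h2 : (√2 : ℂ) ≠ 0 := by simp
  have hs := sq_sqrt_two
  have h₀ : borelPart μ *ᵥ stdVec 0 = (2 * μ) • stdVec 0 := by
    ext i; fin_cases i <;> simp [borelPart, stdVec, Matrix.mulVec, dotProduct, Fin.sum_univ_four]
  have h₁ : borelPart μ *ᵥ stdVec 1 = (√2 : ℂ)⁻¹ • stdVec 0 + (√2 : ℂ)⁻¹ • stdVec 1 := by
    ext i; fin_cases i <;> simp [borelPart, stdVec, Matrix.mulVec, dotProduct, Fin.sum_univ_four]
  refine ⟨mem_GC_of_transpose_mul_mul ?_, map_line1_eq (by simpa using hμ) h₀,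
    map_Uplus_eq (by simpa using hμ) (inv_ne_zero h2) h₀ h₁⟩
  ext i j
  fin_cases i <;> fin_cases j <;>
    simp [borelPart, Jmat, Matrix.mul_apply, Fin.sum_univ_four] <;> field_simp <;> grind

lemma continuous_lowerUnip : Continuous lowerUnip := by
  unfold lowerUnip
  fun_prop

lemma lowerUnip_zero : lowerUnip 0 = 1 := by
  ext i j; fin_cases i <;> fin_cases j <;> simp [lowerUnip]

lemma boost13_mul_mul_borelPart {μ : ℝ} (hμ : μ ≠ 0) :
    boost13 ((μ⁻¹ + μ) / 2) ((μ⁻¹ - μ) / 2) * (cdelta * wb2) * borelPart μ =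
      cb1 * wb2 * lowerUnip μ := by
  have hμ' : (μ : ℂ) ≠ 0 := by exact_mod_cast hμ
  have h2 : (√2 : ℂ) ≠ 0 := by simp
  have hs := sq_sqrt_two
  simp only [cb1, wb2, t1, t2, cdelta, Real.cos_pi_div_four, Real.sin_pi_div_four,
    Real.cos_pi_div_two, Real.sin_pi_div_two]
  ext i j
  fin_cases i <;> fin_cases j <;>
    simp [boost13, borelPart, lowerUnip, Matrix.mul_apply, Fin.sum_univ_four] <;>
    field_simp <;> grind

lemma dc_subset_closure_of_mem_closure {A C : Set M4} {x y : M4}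
    (hA : ∀ a ∈ A, ∀ a' ∈ A, a * a' ∈ A) (hC : ∀ c ∈ C, ∀ c' ∈ C, c * c' ∈ C)
    (hx : x ∈ closure (dc A y C)) : dc A x C ⊆ closure (dc A y C) := by
  rintro _ ⟨a, ha, c, hc, rfl⟩
  have hcont : Continuous fun m : M4 => a * m * c := by fun_prop
  refine closure_mono ?_ (image_closure_subset_closure_image hcont ⟨x, hx, rfl⟩)
  rintro _ ⟨_, ⟨a', ha', c', hc', rfl⟩, rfl⟩
  exact ⟨a * a', hA _ ha _ ha', c' * c, hC _ hc' _ hc, by simp only [mul_assoc]⟩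

/-- `G_ℝ c_{β₁} w_{β₂} B ⊆ cl(G_ℝ c_δ w_{β₂} B)`, i.e. `S'₉ ⊆ S'₇^cl`. -/
theorem stmt_8 : dc GR (cb1 * wb2) Bor ⊆ closure (dc GR (cdelta * wb2) Bor) := by
  refine dc_subset_closure_of_mem_closure (fun _ h _ h' => GR_mul h h')
    (fun _ h _ h' => Bor_mul h h') ?_
  have hlim : Tendsto (fun μ : ℝ => cb1 * wb2 * lowerUnip μ) (𝓝[≠] 0) (𝓝 (cb1 * wb2)) := by
    have h := (continuous_lowerUnip.comp Complex.continuous_ofReal).tendsto 0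
      |>.const_mul (cb1 * wb2)
    simpa [Function.comp_def, lowerUnip_zero] using h.mono_left nhdsWithin_le_nhds
  refine mem_closure_of_tendsto hlim ?_
  filter_upwards [self_mem_nhdsWithin] with μ (hμ : μ ≠ 0)
  refine ⟨_, boost13_mem_GR ?_, _, borelPart_mem_Bor (by exact_mod_cast hμ),
    (boost13_mul_mul_borelPart hμ).symm⟩
  field_simp
  ring
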